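/- If M is an a-coreduced A-module and N is an a-reduced A-module, then there is a natural isomorphism Hom_A(M/aM, N) ≅ Hom_A(M, {n ∈ N : an = 0}). In particular, since Λ_a(M) ≅ M/aM and Γ_a(N) ≅ {n ∈ N : an = 0} in this setting, Hom_A(Λ_a(M), N) ≅ Hom_A(M, Γ_a(N)). -/

import Mathlib

/-!
Any map `M → N` killing `aM` lands in the `a`-torsion `N[a]`, so `Hom(M/aM, N) ≅ Hom(M, N[a])`
always holds. If `M` is `a`-coreduced then `aᵏM = aM` for all `k ≥ 1`, so the inverse system
defining `Λ_a(M)` is constant from the first stage on and `Λ_a(M) ≅ M/aM`. If `N` is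
`a`-reduced then `xᵏn = 0` forces `xn = 0` for `x ∈ a`, so every `N[aᵏ]` equals `N[a]` and
`Γ_a(N) = N[a]`.
-/

/-- `M` is `a`-reduced. -/
def IsAReduced {A : Type*} [CommRing A] (a : Ideal A)
    (M : Type*) [AddCommGroup M] [Module A M] : Prop :=
  ∀ x ∈ a, ∀ m : M, x ^ 2 • m = 0 → x • m = 0

/-- `M` is `a`-coreduced: `aM = a²M`. -/
def IsACoreduced {A : Type*} [CommRing A] (a : Ideal A)
    (M : Type*) [AddCommGroup M] [Module A M] : Prop :=
  a • (⊤ : Submodule A M) = (a ^ 2) • (⊤ : Submodule A M)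

/-- The `a`-power-torsion submodule `Γ_a(N)`. -/
noncomputable def torsionGamma {A : Type*} [CommRing A] (a : Ideal A)
    (N : Type*) [AddCommGroup N] [Module A N] : Submodule A N :=
  ⨆ k : ℕ, Submodule.torsionBySet A N ((a ^ (k + 1) : Ideal A) : Set A)

open Submodule

section

variable {A : Type*} [CommRing A] {a : Ideal A}
  {M : Type*} [AddCommGroup M] [Module A M] {N : Type*} [AddCommGroup N] [Module A N]

variable (a M N) in
noncomputable def homQuotSMulTopEquiv :
    ((M ⧸ a • (⊤ : Submodule A M)) →ₗ[A] N) ≃ₗ[A]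
      (M →ₗ[A] torsionBySet A N (a : Set A)) where
  toFun f := LinearMap.codRestrict _ (f ∘ₗ (a • ⊤ : Submodule A M).mkQ) fun m => by
    rw [mem_torsionBySet_iff]
    rintro ⟨x, hx⟩
    have hxm : (a • ⊤ : Submodule A M).mkQ (x • m) = 0 :=
      (Quotient.mk_eq_zero _).2 (smul_mem_smul hx mem_top)
    rw [LinearMap.comp_apply, ← map_smul, ← map_smul, hxm, map_zero]
  invFun g := liftQ _ ((torsionBySet A N (a : Set A)).subtype ∘ₗ g) <|
    smul_le.2 fun x hx m _ => by
      rw [LinearMap.mem_ker, map_smul]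
      exact (mem_torsionBySet_iff _ _).1 (g m).2 ⟨x, hx⟩
  map_add' _ _ := rfl
  map_smul' _ _ := rfl
  left_inv _ := by ext; rfl
  right_inv _ := rfl

namespace IsACoreduced

theorem pow_succ_smul_top (hM : IsACoreduced a M) (k : ℕ) :
    a ^ (k + 1) • (⊤ : Submodule A M) = a • ⊤ := by
  induction k with
  | zero => rw [zero_add, pow_one]
  | succ k ih =>
    rw [pow_succ', ← smul_eq_mul, Submodule.smul_assoc, ih, ← Submodule.smul_assoc, smul_eq_mul,
      ← pow_two, ← hM]

theorem smul_top_le_pow_smul_top (hM : IsACoreduced a M) (k : ℕ) :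
    a • (⊤ : Submodule A M) ≤ a ^ k • ⊤ := by
  cases k with
  | zero => simp
  | succ k => exact (hM.pow_succ_smul_top k).ge

theorem eval_one_injective (hM : IsACoreduced a M) :
    Function.Injective (AdicCompletion.eval a M 1) := by
  refine (injective_iff_map_eq_zero _).2 fun z hz => AdicCompletion.ext fun k => ?_
  obtain ⟨m, hm⟩ := mkQ_surjective _ (z.val (k + 1))
  -- `z` is determined by its stage `k + 1`, whose image in stage `1` vanishes.
  have hm_one : m ∈ a • (⊤ : Submodule A M) := by
    have h := z.prop (Nat.le_add_left 1 k)
    rw [← hm, ← AdicCompletion.eval_apply, hz] at h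
    rw [← pow_one a]
    exact (Quotient.mk_eq_zero _).1 h
  rw [← z.prop (Nat.le_succ k), ← hm, AdicCompletion.val_zero_apply]
  exact (Quotient.mk_eq_zero _).2 (hM.smul_top_le_pow_smul_top k hm_one)

variable (a M) in
noncomputable def adicCompletionEquiv (hM : IsACoreduced a M) :
    AdicCompletion a M ≃ₗ[A] M ⧸ a • (⊤ : Submodule A M) :=
  LinearEquiv.ofBijective (AdicCompletion.eval a M 1)
      ⟨hM.eval_one_injective, AdicCompletion.eval_surjective a M 1⟩ ≪≫ₗ
    quotEquivOfEq _ _ (by rw [pow_one])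

end IsACoreduced

namespace IsAReduced

theorem smul_eq_zero_of_pow_succ_smul_eq_zero (hN : IsAReduced a N) {x : A} (hx : x ∈ a)
    {n : N} (k : ℕ) (h : x ^ (k + 1) • n = 0) : x • n = 0 := by
  induction k with
  | zero => simpa using h
  | succ k ih =>
    refine ih (hN _ (Ideal.pow_mem_of_mem a hx _ k.succ_pos) n ?_)
    calc (x ^ (k + 1)) ^ 2 • n = x ^ k • x ^ (k + 1 + 1) • n := by
          rw [smul_smul, ← pow_mul, ← pow_add]; ring_nf
      _ = 0 := by rw [h, smul_zero]

theorem torsionBySet_pow_succ (hN : IsAReduced a N) (k : ℕ) :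
    torsionBySet A N ((a ^ (k + 1) : Ideal A) : Set A) = torsionBySet A N (a : Set A) := by
  refine le_antisymm (fun n hn => ?_)
    (torsionBySet_le_torsionBySet_of_subset (Ideal.pow_le_self k.succ_ne_zero))
  rw [mem_torsionBySet_iff] at hn ⊢
  rintro ⟨x, hx⟩
  exact hN.smul_eq_zero_of_pow_succ_smul_eq_zero hx k (hn ⟨_, Ideal.pow_mem_pow hx _⟩)

theorem torsionGamma_eq (hN : IsAReduced a N) :
    torsionGamma a N = torsionBySet A N (a : Set A) := by
  simp only [torsionGamma, hN.torsionBySet_pow_succ, iSup_const]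

end IsAReduced

end

theorem stmt14 {A : Type*} [CommRing A] (a : Ideal A)
    (M : Type*) [AddCommGroup M] [Module A M]
    (N : Type*) [AddCommGroup N] [Module A N]
    (hM : IsACoreduced a M) (hN : IsAReduced a N) :
    Nonempty (((M ⧸ (a • (⊤ : Submodule A M))) →ₗ[A] N) ≃ₗ[A]
        (M →ₗ[A] Submodule.torsionBySet A N (a : Set A))) ∧
    Nonempty ((AdicCompletion a M →ₗ[A] N) ≃ₗ[A] (M →ₗ[A] torsionGamma a N)) :=
  ⟨⟨homQuotSMulTopEquiv a M N⟩,
    ⟨(hM.adicCompletionEquiv a M).arrowCongr (LinearEquiv.refl A N) ≪≫ₗ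
      homQuotSMulTopEquiv a M N ≪≫ₗ
      LinearEquiv.congrRight (LinearEquiv.ofEq _ _ hN.torsionGamma_eq.symm)⟩⟩
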